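/- arXiv:2205.15059 — 2 statements merged into one kernel-verified Lean document; each statement's English description precedes it below -/
import Mathlib

section
/- Let H : [0,1] → [0,1]^d satisfy the change-of-variables identity ∫_{[0,1]^d} f(x) dx = ∫₀¹ f(H(s)) ds for all integrable f. Let μ be an absolutely continuous probability measure on [0,1]^d with density f_μ, and define g_μ(t) = ∫₀^t f_μ(H(s)) ds. If Z is a real random variable whose cumulative distribution function is g_μ, then the random vector H(Z) has law μ, i.e. P(H(Z) ∈ A) = ∫_A f_μ(x) dx for every Borel set A ⊆ [0,1]^d. -/
/-!
Applied to indicator functions, the change-of-variables identity says that `H` pushes Lebesgue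
measure on `[0,1]` forward to Lebesgue measure on the cube `[0,1]^d`; hence `f_μ ∘ H` is, like
`f_μ`, an integrable and a.e. nonnegative density. By the cdf hypothesis the law of `Z` is the
measure with density `f_μ ∘ H` on `[0,1]`, and its image under `H` is the measure with density
`f_μ` on the cube, i.e. `μ` restricted to the cube. That image is a probability measure, so `μ` is
concentrated on the cube and the law of `H(Z)` is `μ`.
-/

open MeasureTheory Set

namespace MeasureTheory

variable {α β : Type*} [MeasurableSpace α] [MeasurableSpace β]

section DensityOfSetIntegral

variable {μ ν : Measure α} [NeZero μ] {f : α → ℝ}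

lemma integrable_of_forall_measure_eq_ofReal_setIntegral
    (hμ : ∀ s, MeasurableSet s → μ s = ENNReal.ofReal (∫ x in s, f x ∂ν)) :
    Integrable f ν := by
  by_contra hf
  have h := hμ univ MeasurableSet.univ
  rw [Measure.restrict_univ, integral_undef hf, ENNReal.ofReal_zero,
    Measure.measure_univ_eq_zero] at h
  exact NeZero.ne μ h

lemma ae_nonneg_of_forall_measure_eq_ofReal_setIntegral
    (hμ : ∀ s, MeasurableSet s → μ s = ENNReal.ofReal (∫ x in s, f x ∂ν)) :
    0 ≤ᵐ[ν] f := by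
  have hf := integrable_of_forall_measure_eq_ofReal_setIntegral hμ
  have htotal : 0 < ∫ x, f x ∂ν := by
    have h := hμ univ MeasurableSet.univ
    rw [Measure.restrict_univ] at h
    refine ENNReal.ofReal_pos.mp (pos_iff_ne_zero.mpr ?_)
    rw [← h]
    exact (NeZero.ne μ) ∘ Measure.measure_univ_eq_zero.mp
  refine ae_nonneg_of_forall_setIntegral_nonneg hf fun s hs _ => ?_
  have hcompl : ∫ x in sᶜ, f x ∂ν ≤ ∫ x, f x ∂ν := by
    have h := measure_mono (μ := μ) (subset_univ sᶜ)
    rwa [hμ _ hs.compl, hμ _ MeasurableSet.univ, Measure.restrict_univ,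
      ENNReal.ofReal_le_ofReal_iff htotal.le] at h
  linarith [integral_add_compl hs hf]

lemma eq_withDensity_ofReal_of_forall_measure_eq_ofReal_setIntegral
    (hμ : ∀ s, MeasurableSet s → μ s = ENNReal.ofReal (∫ x in s, f x ∂ν)) :
    μ = ν.withDensity (fun x => ENNReal.ofReal (f x)) := by
  have hf := integrable_of_forall_measure_eq_ofReal_setIntegral hμ
  have hf0 := ae_nonneg_of_forall_measure_eq_ofReal_setIntegral hμ
  ext s hs
  rw [withDensity_apply _ hs, hμ s hs,
    ofReal_integral_eq_lintegral_ofReal hf.integrableOn (ae_restrict_of_ae hf0)]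

end DensityOfSetIntegral

lemma map_withDensity_comp {μ : Measure α} {g : α → β} (hg : Measurable g) {f : β → ENNReal}
    (hf : AEMeasurable f (μ.map g)) :
    (μ.withDensity fun x => f (g x)).map g = (μ.map g).withDensity f := by
  ext s hs
  rw [Measure.map_apply hg hs, withDensity_apply _ (hg hs), withDensity_apply _ hs,
    ← lintegral_indicator (hg hs), ← lintegral_indicator hs,
    lintegral_map' (hf.indicator hs) hg.aemeasurable]
  rfl

lemma Measure.map_eq_of_forall_integral_comp_eq {μ : Measure α} {ν : Measure β}
    [IsFiniteMeasure μ] [IsFiniteMeasure ν] {H : α → β} (hH : Measurable H)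
    (h : ∀ g : β → ℝ, Integrable g ν → ∫ y, g y ∂ν = ∫ x, g (H x) ∂μ) :
    μ.map H = ν := by
  ext s hs
  have hreal : ν.real s = μ.real (H ⁻¹' s) := by
    rw [← integral_indicator_one hs, ← integral_indicator_one (hH hs)]
    exact h _ ((integrable_const 1).indicator hs)
  rw [Measure.map_apply hH hs]
  exact (measureReal_eq_measureReal_iff (measure_ne_top _ _) (measure_ne_top _ _)).mp hreal.symm

lemma map_eq_withDensity_of_cdf {Ω : Type*} [MeasurableSpace Ω] {P : Measure Ω}
    [IsFiniteMeasure P] {Z : Ω → ℝ} (hZ : Measurable Z) {φ : ℝ → ℝ} {a b : ℝ}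
    (hφ : IntegrableOn φ (Icc a b)) (hφ0 : 0 ≤ᵐ[volume.restrict (Icc a b)] φ)
    (hcdf : ∀ t, P {ω | Z ω ≤ t} = ENNReal.ofReal (∫ s in Icc a (min t b), φ s)) :
    P.map Z = (volume.restrict (Icc a b)).withDensity (fun s => ENNReal.ofReal (φ s)) := by
  refine Measure.ext_of_Iic _ _ fun t => ?_
  have hIic : Iic t ∩ Icc a b = Icc a (min t b) := by
    ext; simp only [mem_inter_iff, mem_Iic, mem_Icc, le_min_iff]; tauto
  have hsub : Icc a (min t b) ⊆ Icc a b := Icc_subset_Icc_right (min_le_right t b)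
  rw [Measure.map_apply hZ measurableSet_Iic, withDensity_apply _ measurableSet_Iic,
    Measure.restrict_restrict measurableSet_Iic, hIic,
    ← ofReal_integral_eq_lintegral_ofReal (hφ.mono_set hsub)
      (ae_restrict_of_ae_restrict_of_subset hsub hφ0)]
  exact hcdf t

end MeasureTheory

/-- Lemma 1: if `Z` has cumulative distribution function `g_μ(t) = ∫₀^t f_μ(H(s)) ds`,
then `H(Z)` has law `μ` (the measure with density `f_μ`). -/
theorem law_of_hilbert_composition {d : ℕ}
    (H : ℝ → (Fin d → ℝ)) (hH : Measurable H)
    (fμ : (Fin d → ℝ) → ℝ)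
    (hchg : ∀ g : (Fin d → ℝ) → ℝ, IntegrableOn g (Set.Icc (0 : Fin d → ℝ) 1) →
      ∫ x in Set.Icc (0 : Fin d → ℝ) 1, g x = ∫ s in Set.Icc (0:ℝ) 1, g (H s))
    (μ : Measure (Fin d → ℝ)) [IsProbabilityMeasure μ]
    (hμ : ∀ A : Set (Fin d → ℝ), MeasurableSet A →
      μ A = ENNReal.ofReal (∫ x in A, fμ x))
    {Ω : Type*} [MeasureSpace Ω] [IsProbabilityMeasure (volume : Measure Ω)]
    (Z : Ω → ℝ) (hZ : Measurable Z)
    (hcdf : ∀ t : ℝ, volume {ω | Z ω ≤ t}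
      = ENNReal.ofReal (∫ s in Set.Icc (0:ℝ) (min t 1), fμ (H s))) :
    ∀ A : Set (Fin d → ℝ), MeasurableSet A →
      volume {ω | H (Z ω) ∈ A} = ENNReal.ofReal (∫ x in A, fμ x) := by
  have : IsFiniteMeasure (volume.restrict (Icc (0 : Fin d → ℝ) 1)) :=
    isFiniteMeasure_restrict.2 isCompact_Icc.measure_lt_top.ne
  have hf := integrable_of_forall_measure_eq_ofReal_setIntegral hμ
  have hH_map : (volume.restrict (Icc (0 : ℝ) 1)).map H = volume.restrict (Icc 0 1) :=
    Measure.map_eq_of_forall_integral_comp_eq hH hchg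
  have hfH : IntegrableOn (fun s => fμ (H s)) (Icc 0 1) := by
    refine Integrable.comp_measurable ?_ hH
    rw [hH_map]
    exact hf.integrableOn
  have hfH0 : 0 ≤ᵐ[volume.restrict (Icc (0 : ℝ) 1)] fun s => fμ (H s) :=
    ae_of_ae_map hH.aemeasurable (p := fun y => 0 ≤ fμ y) (by
      rw [hH_map]
      exact ae_restrict_of_ae (ae_nonneg_of_forall_measure_eq_ofReal_setIntegral hμ))
  have hlaw : volume.map (H ∘ Z) = μ.restrict (Icc 0 1) := by
    rw [← Measure.map_map hH hZ, map_eq_withDensity_of_cdf hZ hfH hfH0 hcdf,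
      map_withDensity_comp hH (f := fun y => ENNReal.ofReal (fμ y))
        (by rw [hH_map]; exact hf.aemeasurable.restrict.ennreal_ofReal),
      hH_map, ← restrict_withDensity measurableSet_Icc,
      ← eq_withDensity_ofReal_of_forall_measure_eq_ofReal_setIntegral hμ]
  have hcube : μ.restrict (Icc 0 1) = μ := by
    have : IsProbabilityMeasure (volume.map (H ∘ Z)) :=
      Measure.isProbabilityMeasure_map (hH.comp hZ).aemeasurable
    refine Measure.restrict_eq_self_of_ae_mem (mem_ae_iff.mpr
      ((prob_compl_eq_zero_iff measurableSet_Icc).mpr ?_))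
    rw [← Measure.restrict_apply_univ, ← hlaw, measure_univ]
  intro A hA
  rw [← hμ A hA, ← hcube, ← hlaw, Measure.map_apply (hH.comp hZ) hA]
  rfl
end

section
/- For two one-dimensional probability measures μ and ν with cumulative distribution functions F_μ, F_ν, the p-Wasserstein distance admits the closed form W_p(μ,ν) = (∫₀¹ |F_μ^{-1}(z) − F_ν^{-1}(z)|^p dz)^{1/p}, where F^{-1}(z) = inf{x : F(x) ≥ z} is the quantile function. -/
/-!
Let `Φ` be a convex cost whose right derivative is a Stieltjes function `f`, and let
`e x s = 1[s ≤ x] - 1[s ≤ 0]` (`signedIndicator`). Integrating `e x s * e y t` against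
`ρ = f'(s - t) ds dt` (`mixedMeasure f`) gives `Φ x + Φ (-y) - Φ (x - y) - Φ 0`. Hence, for a
coupling `γ` of `μ` and `ν`, the cost `∫ Φ (x - y) dγ` equals a quantity depending only on `μ`
and `ν` minus the `ρ`-integral of `γ([s, ∞) × [t, ∞))`, up to terms depending only on `μ` and
`ν`. This joint survival function is at most `min (μ [s, ∞)) (ν [t, ∞))`, and the comonotone
coupling `(F_μ⁻¹(U), F_ν⁻¹(U))`, with `U` uniform on `(0, 1)`, attains the bound for every `s, t`.
So it minimises the cost (Cambanis–Simons–Stout), and its cost is `∫₀¹ |F_μ⁻¹ - F_ν⁻¹|^p`.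
-/

open MeasureTheory Set Filter

theorem StieltjesFunction.isClosed_setOf_le (f : StieltjesFunction ℝ) (z : ℝ) :
    IsClosed {x | z ≤ f x} := by
  refine isOpen_compl_iff.mp (isOpen_iff_mem_nhds.mpr fun x hx => ?_)
  replace hx : f x < z := not_le.mp hx
  rw [← nhdsLE_sup_nhdsGE, mem_sup]
  exact ⟨mem_of_superset self_mem_nhdsWithin fun y hy => not_le.mpr ((f.mono hy).trans_lt hx),
    ((f.right_continuous x).eventually (eventually_lt_nhds hx)).mono fun _ hy => not_le.mpr hy⟩

lemma volume_Ioo_inter_Iic {c : ℝ} (hc : c ≤ 1) :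
    volume (Ioo 0 1 ∩ Iic c) = ENNReal.ofReal c := by
  refine le_antisymm ?_ ?_
  · calc volume (Ioo 0 1 ∩ Iic c) ≤ volume (Icc 0 c) :=
          measure_mono fun z hz => ⟨hz.1.1.le, hz.2⟩
      _ = ENNReal.ofReal c := by rw [Real.volume_Icc, sub_zero]
  · calc ENNReal.ofReal c = volume (Ioo 0 c) := by rw [Real.volume_Ioo, sub_zero]
      _ ≤ volume (Ioo 0 1 ∩ Iic c) :=
          measure_mono fun z hz => ⟨⟨hz.1, hz.2.trans_le hc⟩, hz.2.le⟩

theorem subset_or_subset_of_monotoneOn {α β γ : Type*} [LinearOrder α] [Preorder β] [Preorder γ]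
    {f : α → β} {g : α → γ} {S : Set α} (hf : MonotoneOn f S) (hg : MonotoneOn g S) (b : β)
    (c : γ) : f ⁻¹' Ici b ∩ S ⊆ g ⁻¹' Ici c ∩ S ∨ g ⁻¹' Ici c ∩ S ⊆ f ⁻¹' Ici b ∩ S := by
  by_contra! h
  obtain ⟨x, ⟨hfx, hxS⟩, hgx⟩ := not_subset.mp h.1
  obtain ⟨y, ⟨hgy, hyS⟩, hfy⟩ := not_subset.mp h.2
  rcases le_total x y with hxy | hyx
  · exact hfy ⟨(mem_Ici.mp hfx).trans (hf hxS hyS hxy), hyS⟩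
  · exact hgx ⟨(mem_Ici.mp hgy).trans (hg hyS hxS hyx), hxS⟩

theorem measure_prod_le_min_map {α β : Type*} [MeasurableSpace α] [MeasurableSpace β]
    (γ : Measure (α × β)) {A : Set α} {B : Set β} (hA : MeasurableSet A) (hB : MeasurableSet B) :
    γ (A ×ˢ B) ≤ min (γ.map Prod.fst A) (γ.map Prod.snd B) := by
  rw [Measure.map_apply measurable_fst hA, Measure.map_apply measurable_snd hB]
  exact le_min (measure_mono fun _ hz => hz.1) (measure_mono fun _ hz => hz.2)

namespace ProbabilityTheory

-- Meaningful for `z ∈ (0, 1)` only: elsewhere the set may be empty or unbounded below.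
noncomputable def quantile (μ : Measure ℝ) (z : ℝ) : ℝ := sInf {x | z ≤ cdf μ x}

section Quantile

variable {μ : Measure ℝ} {z x : ℝ}

lemma bddBelow_setOf_le_cdf (hz : 0 < z) : BddBelow {x | z ≤ cdf μ x} := by
  obtain ⟨x₀, hx₀⟩ :=
    ((tendsto_cdf_atBot μ).eventually (eventually_lt_nhds hz)).exists_forall_of_atBot
  exact ⟨x₀, fun x hx => not_lt.mp fun hlt => (hx₀ x hlt.le).not_ge hx⟩

lemma nonempty_setOf_le_cdf (hz : z < 1) : {x | z ≤ cdf μ x}.Nonempty :=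
  ((tendsto_cdf_atTop μ).eventually (eventually_ge_nhds hz)).exists

lemma le_cdf_quantile (hz : z ∈ Ioo 0 1) : z ≤ cdf μ (quantile μ z) :=
  (cdf μ).isClosed_setOf_le z |>.csInf_mem (nonempty_setOf_le_cdf hz.2)
    (bddBelow_setOf_le_cdf hz.1)

theorem quantile_le_iff (hz : z ∈ Ioo 0 1) : quantile μ z ≤ x ↔ z ≤ cdf μ x :=
  ⟨fun h => (le_cdf_quantile hz).trans (monotone_cdf μ h),
    fun h => csInf_le (bddBelow_setOf_le_cdf hz.1) h⟩

theorem monotoneOn_quantile : MonotoneOn (quantile μ) (Ioo 0 1) := fun _ hz _ hw hzw =>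
  (quantile_le_iff hz).mpr (hzw.trans (le_cdf_quantile hw))

theorem aemeasurable_quantile : AEMeasurable (quantile μ) (volume.restrict (Ioo 0 1)) :=
  aemeasurable_restrict_of_monotoneOn measurableSet_Ioo monotoneOn_quantile

theorem map_quantile [IsProbabilityMeasure μ] :
    (volume.restrict (Ioo 0 1)).map (quantile μ) = μ := by
  refine Measure.ext_of_Iic _ _ fun x => ?_
  have hpre : quantile μ ⁻¹' Iic x ∩ Ioo 0 1 = Ioo 0 1 ∩ Iic (cdf μ x) := by
    ext z
    simp only [mem_inter_iff, mem_preimage, mem_Iic]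
    exact ⟨fun h => ⟨h.2, (quantile_le_iff h.2).mp h.1⟩,
      fun h => ⟨(quantile_le_iff h.1).mpr h.2, h.1⟩⟩
  rw [Measure.map_apply_of_aemeasurable aemeasurable_quantile measurableSet_Iic,
    Measure.restrict_apply' measurableSet_Ioo, hpre, volume_Ioo_inter_Iic (cdf_le_one μ x),
    ofReal_cdf]

theorem volume_preimage_quantile_inter_Ioo [IsProbabilityMeasure μ] {A : Set ℝ}
    (hA : MeasurableSet A) : volume (quantile μ ⁻¹' A ∩ Ioo 0 1) = μ A := by
  conv_rhs => rw [← map_quantile (μ := μ)]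
  rw [Measure.map_apply_of_aemeasurable aemeasurable_quantile hA,
    Measure.restrict_apply' measurableSet_Ioo]

end Quantile

noncomputable def comonotoneCoupling (μ ν : Measure ℝ) : Measure (ℝ × ℝ) :=
  (volume.restrict (Ioo 0 1)).map fun z => (quantile μ z, quantile ν z)

section ComonotoneCoupling

variable (μ ν : Measure ℝ)

lemma aemeasurable_quantile_prod :
    AEMeasurable (fun z => (quantile μ z, quantile ν z)) (volume.restrict (Ioo 0 1)) :=
  aemeasurable_quantile.prodMk aemeasurable_quantile

instance : IsProbabilityMeasure (comonotoneCoupling μ ν) :=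
  haveI : IsProbabilityMeasure (volume.restrict (Ioo (0 : ℝ) 1)) :=
    ⟨by rw [Measure.restrict_apply_univ, Real.volume_Ioo, sub_zero, ENNReal.ofReal_one]⟩
  Measure.isProbabilityMeasure_map (aemeasurable_quantile_prod μ ν)

theorem comonotoneCoupling_map_fst [IsProbabilityMeasure μ] :
    (comonotoneCoupling μ ν).map Prod.fst = μ := by
  rw [comonotoneCoupling, AEMeasurable.map_map_of_aemeasurable measurable_fst.aemeasurable
    (aemeasurable_quantile_prod μ ν)]
  exact map_quantile

theorem comonotoneCoupling_map_snd [IsProbabilityMeasure ν] :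
    (comonotoneCoupling μ ν).map Prod.snd = ν := by
  rw [comonotoneCoupling, AEMeasurable.map_map_of_aemeasurable measurable_snd.aemeasurable
    (aemeasurable_quantile_prod μ ν)]
  exact map_quantile

theorem comonotoneCoupling_Ici_prod_Ici [IsProbabilityMeasure μ] [IsProbabilityMeasure ν]
    (s t : ℝ) : comonotoneCoupling μ ν (Ici s ×ˢ Ici t) = min (μ (Ici s)) (ν (Ici t)) := by
  rw [comonotoneCoupling, Measure.map_apply_of_aemeasurable (aemeasurable_quantile_prod μ ν)
    (measurableSet_Ici.prod measurableSet_Ici), Measure.restrict_apply' measurableSet_Ioo,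
    mk_preimage_prod, inter_inter_distrib_right,
    ← volume_preimage_quantile_inter_Ioo (μ := μ) measurableSet_Ici,
    ← volume_preimage_quantile_inter_Ioo (μ := ν) measurableSet_Ici]
  rcases subset_or_subset_of_monotoneOn monotoneOn_quantile monotoneOn_quantile s t with h | h
  · rw [inter_eq_left.mpr h, min_eq_left (measure_mono h)]
  · rw [inter_eq_right.mpr h, min_eq_right (measure_mono h)]

end ComonotoneCoupling

noncomputable def signedIndicator (x : ℝ) : ℝ → ℝ :=
  (Ioc 0 x).indicator 1 - (Ioc x 0).indicator 1

section SignedIndicator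

variable {x : ℝ}

lemma signedIndicator_apply (x s : ℝ) :
    signedIndicator x s = (if s ≤ x then 1 else 0) - (if s ≤ 0 then 1 else 0) := by
  simp only [signedIndicator, Pi.sub_apply, indicator, mem_Ioc, Pi.one_apply]
  split_ifs <;> grind

lemma signedIndicator_add (x t u : ℝ) :
    signedIndicator x (t + u) = signedIndicator (x - t) u - signedIndicator (-t) u := by
  simp only [signedIndicator_apply]
  split_ifs <;> grind

lemma signedIndicator_nonneg (hx : 0 ≤ x) (s : ℝ) : 0 ≤ signedIndicator x s := by
  rw [signedIndicator_apply]
  split_ifs <;> grind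

lemma signedIndicator_nonpos (hx : x ≤ 0) (s : ℝ) : signedIndicator x s ≤ 0 := by
  rw [signedIndicator_apply]
  split_ifs <;> grind

lemma abs_signedIndicator_le (x s : ℝ) :
    |signedIndicator x s| ≤ (Icc (-|x|) |x|).indicator 1 s := by
  simp only [signedIndicator_apply, indicator, mem_Icc, Pi.one_apply]
  split_ifs <;> grind

lemma measurable_uncurry_signedIndicator : Measurable (Function.uncurry signedIndicator) := by
  simp only [Function.uncurry_def, signedIndicator_apply]
  exact (Measurable.ite (measurableSet_le measurable_snd measurable_fst) measurable_const
    measurable_const).sub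
    (Measurable.ite (measurableSet_le measurable_snd measurable_const) measurable_const
    measurable_const)

lemma integral_signedIndicator_mul (ν : Measure ℝ) {h : ℝ → ℝ}
    (hh : IntervalIntegrable h ν 0 x) :
    ∫ s, signedIndicator x s * h s ∂ν = ∫ s in 0..x, h s ∂ν := by
  have hpt : ∀ s,
      signedIndicator x s * h s = (Ioc 0 x).indicator h s - (Ioc x 0).indicator h s := by
    intro s
    simp only [signedIndicator, Pi.sub_apply, indicator, mem_Ioc, Pi.one_apply]
    split_ifs <;> grind
  simp_rw [hpt]
  rw [integral_sub ((integrable_indicator_iff measurableSet_Ioc).mpr hh.1)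
    ((integrable_indicator_iff measurableSet_Ioc).mpr hh.2), integral_indicator measurableSet_Ioc,
    integral_indicator measurableSet_Ioc, intervalIntegral]

lemma integrable_signedIndicator (ν : Measure ℝ) [IsLocallyFiniteMeasure ν] (x : ℝ) :
    Integrable (signedIndicator x) ν :=
  ((integrable_indicator_iff measurableSet_Ioc).mpr (integrableOn_const measure_Ioc_lt_top.ne)).sub
    ((integrable_indicator_iff measurableSet_Ioc).mpr (integrableOn_const measure_Ioc_lt_top.ne))

lemma integral_signedIndicator_stieltjes (f : StieltjesFunction ℝ) (x : ℝ) :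
    ∫ u, signedIndicator x u ∂f.measure = f x - f 0 := by
  have h := integral_signedIndicator_mul f.measure (h := 1) (x := x) intervalIntegrable_const
  simp only [Pi.one_apply, mul_one] at h
  rw [h, intervalIntegral.integral_const', measureReal_def, measureReal_def, f.measure_Ioc,
    f.measure_Ioc, ENNReal.toReal_ofReal', ENNReal.toReal_ofReal', smul_eq_mul, mul_one]
  grind

end SignedIndicator

@[fun_prop]
lemma Measurable.signedIndicator {α : Type*} [MeasurableSpace α] {g h : α → ℝ}
    (hg : Measurable g) (hh : Measurable h) : Measurable fun a => signedIndicator (g a) (h a) :=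
  measurable_uncurry_signedIndicator.comp (hg.prodMk hh)

section Coupling

variable {γ : Measure (ℝ × ℝ)}

lemma integral_signedIndicator_mul_signedIndicator [IsProbabilityMeasure γ] (s t : ℝ) :
    ∫ z, signedIndicator z.1 s * signedIndicator z.2 t ∂γ
      = γ.real (Ici s ×ˢ Ici t) - (if s ≤ 0 then 1 else 0) * (γ.map Prod.snd).real (Ici t)
        - (if t ≤ 0 then 1 else 0) * (γ.map Prod.fst).real (Ici s)
        + (if s ≤ 0 then 1 else 0) * (if t ≤ 0 then 1 else 0) := by
  set a : ℝ := if s ≤ 0 then 1 else 0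
  set b : ℝ := if t ≤ 0 then 1 else 0
  have hmeas₁ : MeasurableSet (Prod.fst ⁻¹' Ici s : Set (ℝ × ℝ)) :=
    measurable_fst measurableSet_Ici
  have hmeas₂ : MeasurableSet (Prod.snd ⁻¹' Ici t : Set (ℝ × ℝ)) :=
    measurable_snd measurableSet_Ici
  have hmeas : MeasurableSet (Ici s ×ˢ Ici t) := measurableSet_Ici.prod measurableSet_Ici
  have hint : ∀ {S : Set (ℝ × ℝ)}, MeasurableSet S → Integrable (S.indicator 1) γ :=
    fun hS => (integrable_const (1 : ℝ)).indicator hS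
  have hpt : ∀ z : ℝ × ℝ, signedIndicator z.1 s * signedIndicator z.2 t
      = (Ici s ×ˢ Ici t).indicator 1 z - a * (Prod.snd ⁻¹' Ici t).indicator 1 z
        - b * (Prod.fst ⁻¹' Ici s).indicator 1 z + a * b := fun z => by
    simp only [signedIndicator_apply, indicator, mem_prod, mem_preimage, mem_Ici, Pi.one_apply,
      a, b]
    split_ifs <;> grind
  simp_rw [hpt]
  rw [integral_add ?_ (integrable_const _), integral_sub ?_ ((hint hmeas₁).const_mul b),
    integral_sub (hint hmeas) ((hint hmeas₂).const_mul a), integral_const_mul, integral_const_mul,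
    integral_indicator_one hmeas, integral_indicator_one hmeas₁, integral_indicator_one hmeas₂,
    integral_const, probReal_univ, one_smul, map_measureReal_apply measurable_fst measurableSet_Ici,
    map_measureReal_apply measurable_snd measurableSet_Ici]
  · exact (hint hmeas).sub ((hint hmeas₂).const_mul a)
  · exact ((hint hmeas).sub ((hint hmeas₂).const_mul a)).sub ((hint hmeas₁).const_mul b)

lemma integral_signedIndicator_mul_signedIndicator_mono {γ' : Measure (ℝ × ℝ)}
    [IsProbabilityMeasure γ] [IsProbabilityMeasure γ'] (h₁ : γ.map Prod.fst = γ'.map Prod.fst)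
    (h₂ : γ.map Prod.snd = γ'.map Prod.snd) {s t : ℝ}
    (hle : γ (Ici s ×ˢ Ici t) ≤ γ' (Ici s ×ˢ Ici t)) :
    ∫ z, signedIndicator z.1 s * signedIndicator z.2 t ∂γ
      ≤ ∫ z, signedIndicator z.1 s * signedIndicator z.2 t ∂γ' := by
  rw [integral_signedIndicator_mul_signedIndicator, integral_signedIndicator_mul_signedIndicator,
    h₁, h₂]
  gcongr
  exact ENNReal.toReal_mono (measure_ne_top _ _) hle

end Coupling

-- For differentiable `f` this is the measure `f' (s - t) ds dt`, i.e. `-∂ₛ∂ₜ Φ (s - t) ds dt`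
-- when `f = Φ'`.
noncomputable def mixedMeasure (f : StieltjesFunction ℝ) : Measure (ℝ × ℝ) :=
  (volume.prod f.measure).map fun q => (q.1 + q.2, q.1)

section MixedMeasure

variable (f : StieltjesFunction ℝ) {Φ : ℝ → ℝ} {γ : Measure (ℝ × ℝ)}

instance : SFinite (mixedMeasure f) := by unfold mixedMeasure; infer_instance

lemma integrable_signedIndicator_mul_comp_add (x y : ℝ) :
    Integrable (fun q : ℝ × ℝ => signedIndicator x (q.1 + q.2) * signedIndicator y q.1)
      (volume.prod f.measure) := by
  set B : Set (ℝ × ℝ) := Icc (-|y|) |y| ×ˢ Icc (-(|x| + |y|)) (|x| + |y|)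
  refine Integrable.mono' (g := B.indicator 1) ?_ (by fun_prop : Measurable _).aestronglyMeasurable
    (Eventually.of_forall fun q => ?_)
  · exact (integrable_indicator_iff (measurableSet_Icc.prod measurableSet_Icc)).mpr
      (integrableOn_const (isCompact_Icc.prod isCompact_Icc).measure_lt_top.ne)
  rw [norm_mul, Real.norm_eq_abs, Real.norm_eq_abs]
  calc |signedIndicator x (q.1 + q.2)| * |signedIndicator y q.1|
      ≤ (Icc (-|x|) |x|).indicator 1 (q.1 + q.2) * (Icc (-|y|) |y|).indicator 1 q.1 :=
        mul_le_mul (abs_signedIndicator_le _ _) (abs_signedIndicator_le _ _) (abs_nonneg _)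
          (indicator_nonneg (fun _ _ => zero_le_one) _)
    _ ≤ B.indicator 1 q := by
        simp only [B, indicator, mem_Icc, mem_prod, Pi.one_apply]
        split_ifs <;> grind

lemma integrable_signedIndicator_mul_mixedMeasure (x y : ℝ) :
    Integrable (fun st : ℝ × ℝ => signedIndicator x st.1 * signedIndicator y st.2)
      (mixedMeasure f) := by
  rw [mixedMeasure, integrable_map_measure (by fun_prop : Measurable _).aestronglyMeasurable
    (by fun_prop : Measurable fun q : ℝ × ℝ => (q.1 + q.2, q.1)).aemeasurable]
  exact integrable_signedIndicator_mul_comp_add f x y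

lemma integral_signedIndicator_mul_mixedMeasure (hΦ : ∀ a b, ∫ u in a..b, f u = Φ b - Φ a)
    (x y : ℝ) : ∫ st, signedIndicator x st.1 * signedIndicator y st.2 ∂mixedMeasure f
      = Φ x + Φ (-y) - Φ (x - y) - Φ 0 := by
  have hinner : ∀ t, ∫ u, signedIndicator x (t + u) * signedIndicator y t ∂f.measure
      = signedIndicator y t * (f (x - t) - f (-t)) := fun t => by
    simp_rw [signedIndicator_add]
    rw [integral_mul_const, integral_sub (integrable_signedIndicator _ _)
      (integrable_signedIndicator _ _), integral_signedIndicator_stieltjes,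
      integral_signedIndicator_stieltjes]
    ring
  have hint₁ : IntervalIntegrable (fun t => f (x - t)) volume 0 y :=
    (f.mono.comp_antitone fun _ _ h => sub_le_sub_left h x).intervalIntegrable
  have hint₂ : IntervalIntegrable (fun t => f (-t)) volume 0 y :=
    (f.mono.comp_antitone fun _ _ h => neg_le_neg h).intervalIntegrable
  rw [mixedMeasure,
    integral_map (by fun_prop : Measurable fun q : ℝ × ℝ => (q.1 + q.2, q.1)).aemeasurable
      (by fun_prop : Measurable _).aestronglyMeasurable,
    integral_prod _ (integrable_signedIndicator_mul_comp_add f x y)]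
  simp only [hinner]
  rw [integral_signedIndicator_mul volume (hint₁.sub hint₂),
    intervalIntegral.integral_sub hint₁ hint₂,
    intervalIntegral.integral_comp_sub_left (fun v => f v),
    intervalIntegral.integral_comp_neg (fun v => f v), hΦ, hΦ, sub_zero, neg_zero]
  ring

lemma integral_norm_signedIndicator_mul_mixedMeasure
    (hΦ : ∀ a b, ∫ u in a..b, f u = Φ b - Φ a) (x y : ℝ) :
    ∫ st, ‖signedIndicator x st.1 * signedIndicator y st.2‖ ∂mixedMeasure f
      = |Φ x + Φ (-y) - Φ (x - y) - Φ 0| := by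
  rw [← integral_signedIndicator_mul_mixedMeasure f hΦ]
  have hsign : (∀ st : ℝ × ℝ, 0 ≤ signedIndicator x st.1 * signedIndicator y st.2) ∨
      ∀ st : ℝ × ℝ, signedIndicator x st.1 * signedIndicator y st.2 ≤ 0 := by
    rcases le_total 0 x with hx | hx <;> rcases le_total 0 y with hy | hy
    · exact .inl fun _ => mul_nonneg (signedIndicator_nonneg hx _) (signedIndicator_nonneg hy _)
    · exact .inr fun _ =>
        mul_nonpos_of_nonneg_of_nonpos (signedIndicator_nonneg hx _) (signedIndicator_nonpos hy _)
    · exact .inr fun _ =>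
        mul_nonpos_of_nonpos_of_nonneg (signedIndicator_nonpos hx _) (signedIndicator_nonneg hy _)
    · exact .inl fun _ =>
        mul_nonneg_of_nonpos_of_nonpos (signedIndicator_nonpos hx _) (signedIndicator_nonpos hy _)
  rcases hsign with h | h
  · simp_rw [Real.norm_of_nonneg (h _)]
    rw [abs_of_nonneg (integral_nonneg h)]
  · simp_rw [Real.norm_of_nonpos (h _)]
    rw [integral_neg, abs_of_nonpos (integral_nonpos h)]

lemma integrable_signedIndicator_mul_prod_mixedMeasure [IsFiniteMeasure γ]
    (hΦ : ∀ a b, ∫ u in a..b, f u = Φ b - Φ a) (h₁ : Integrable Φ (γ.map Prod.fst))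
    (h₂ : Integrable (fun y => Φ (-y)) (γ.map Prod.snd))
    (h₃ : Integrable (fun z => Φ (z.1 - z.2)) γ) :
    Integrable
      (fun q : (ℝ × ℝ) × (ℝ × ℝ) => signedIndicator q.1.1 q.2.1 * signedIndicator q.1.2 q.2.2)
      (γ.prod (mixedMeasure f)) := by
  rw [integrable_prod_iff (by fun_prop : Measurable _).aestronglyMeasurable]
  refine ⟨Eventually.of_forall fun z => integrable_signedIndicator_mul_mixedMeasure f z.1 z.2, ?_⟩
  simp_rw [integral_norm_signedIndicator_mul_mixedMeasure f hΦ]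
  exact (((h₁.comp_measurable measurable_fst).add (h₂.comp_measurable measurable_snd)).sub h₃
    |>.sub (integrable_const _)).abs

lemma integral_comp_sub_eq_sub_integral_mixedMeasure [IsProbabilityMeasure γ]
    (hΦ : ∀ a b, ∫ u in a..b, f u = Φ b - Φ a) (h₁ : Integrable Φ (γ.map Prod.fst))
    (h₂ : Integrable (fun y => Φ (-y)) (γ.map Prod.snd))
    (h₃ : Integrable (fun z => Φ (z.1 - z.2)) γ) :
    ∫ z, Φ (z.1 - z.2) ∂γ = ∫ x, Φ x ∂γ.map Prod.fst + ∫ y, Φ (-y) ∂γ.map Prod.snd - Φ 0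
      - ∫ st, ∫ z, signedIndicator z.1 st.1 * signedIndicator z.2 st.2 ∂γ ∂mixedMeasure f := by
  have h₁' : Integrable (fun z => Φ z.1) γ := h₁.comp_measurable measurable_fst
  have h₂' : Integrable (fun z => Φ (-z.2)) γ := h₂.comp_measurable measurable_snd
  have h₁₂ : Integrable (fun z : ℝ × ℝ => Φ z.1 + Φ (-z.2)) γ := h₁'.add h₂'
  have h₁₂₃ : Integrable (fun z : ℝ × ℝ => Φ z.1 + Φ (-z.2) - Φ (z.1 - z.2)) γ := h₁₂.sub h₃
  rw [← integral_integral_swap (integrable_signedIndicator_mul_prod_mixedMeasure f hΦ h₁ h₂ h₃)]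
  simp only [integral_signedIndicator_mul_mixedMeasure f hΦ]
  rw [integral_sub h₁₂₃ (integrable_const _), integral_sub h₁₂ h₃, integral_add h₁' h₂',
    integral_const, probReal_univ, one_smul, integral_map measurable_fst.aemeasurable h₁.1,
    integral_map measurable_snd.aemeasurable h₂.1]
  ring

end MixedMeasure

theorem integral_comp_sub_le_of_forall_measure_Ici_prod_Ici_le (f : StieltjesFunction ℝ)
    {Φ : ℝ → ℝ} (hΦ : ∀ a b, ∫ u in a..b, f u = Φ b - Φ a) {μ ν : Measure ℝ}
    (hμ : Integrable Φ μ) (hν : Integrable (fun y => Φ (-y)) ν) {γ γ' : Measure (ℝ × ℝ)}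
    [IsProbabilityMeasure γ] [IsProbabilityMeasure γ'] (hγ₁ : γ.map Prod.fst = μ)
    (hγ₂ : γ.map Prod.snd = ν) (hγ'₁ : γ'.map Prod.fst = μ) (hγ'₂ : γ'.map Prod.snd = ν)
    (hγ : Integrable (fun z => Φ (z.1 - z.2)) γ) (hγ' : Integrable (fun z => Φ (z.1 - z.2)) γ')
    (hle : ∀ s t, γ (Ici s ×ˢ Ici t) ≤ γ' (Ici s ×ˢ Ici t)) :
    ∫ z, Φ (z.1 - z.2) ∂γ' ≤ ∫ z, Φ (z.1 - z.2) ∂γ := by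
  subst hγ₁ hγ₂
  rw [integral_comp_sub_eq_sub_integral_mixedMeasure f hΦ hμ hν hγ,
    integral_comp_sub_eq_sub_integral_mixedMeasure f hΦ (hγ'₁ ▸ hμ) (hγ'₂ ▸ hν) hγ', hγ'₁, hγ'₂]
  refine sub_le_sub_left (integral_mono ?_ ?_ fun st =>
    integral_signedIndicator_mul_signedIndicator_mono hγ'₁.symm hγ'₂.symm (hle st.1 st.2)) _
  · exact (integrable_signedIndicator_mul_prod_mixedMeasure f hΦ hμ hν hγ).integral_prod_right
  · exact (integrable_signedIndicator_mul_prod_mixedMeasure f hΦ (hγ'₁ ▸ hμ) (hγ'₂ ▸ hν)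
      hγ').integral_prod_right

-- At `u = 0` this is `p * 0 ^ (p - 1)`, i.e. `1` when `p = 1` since `0 ^ 0 = 1`.
noncomputable def absRpowRightDeriv (p u : ℝ) : ℝ :=
  if u < 0 then -(p * (-u) ^ (p - 1)) else p * u ^ (p - 1)

section AbsRpow

variable {p : ℝ}

lemma monotone_absRpowRightDeriv (hp : 1 ≤ p) : Monotone (absRpowRightDeriv p) := by
  intro u v huv
  have hp₀ : 0 ≤ p := by linarith
  unfold absRpowRightDeriv
  split_ifs with hu hv hv
  · exact neg_le_neg (mul_le_mul_of_nonneg_left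
      (Real.rpow_le_rpow (by linarith) (by linarith) (by linarith)) hp₀)
  · have := mul_nonneg hp₀ (Real.rpow_nonneg (neg_nonneg.mpr hu.le) (p - 1))
    have := mul_nonneg hp₀ (Real.rpow_nonneg (not_lt.mp hv) (p - 1))
    linarith
  · exact absurd (huv.trans_lt hv) hu
  · exact mul_le_mul_of_nonneg_left (Real.rpow_le_rpow (not_lt.mp hu) huv (by linarith)) hp₀

lemma continuousWithinAt_Ici_absRpowRightDeriv (hp : 1 ≤ p) (x : ℝ) :
    ContinuousWithinAt (absRpowRightDeriv p) (Ici x) x := by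
  have hrpow : Continuous fun u : ℝ => u ^ (p - 1) := Real.continuous_rpow_const (by linarith)
  rcases lt_or_ge x 0 with hx | hx
  · refine ContinuousAt.continuousWithinAt ?_
    refine ((hrpow.comp continuous_neg).const_mul p).neg.continuousAt.congr ?_
    filter_upwards [eventually_lt_nhds hx] with u hu
    simp [absRpowRightDeriv, hu]
  · exact (hrpow.const_mul p).continuousWithinAt.congr
      (fun u hu => if_neg (not_lt.mpr (hx.trans hu))) (if_neg (not_lt.mpr hx))

noncomputable def absRpowStieltjes (hp : 1 ≤ p) : StieltjesFunction ℝ where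
  toFun := absRpowRightDeriv p
  mono' := monotone_absRpowRightDeriv hp
  right_continuous' := continuousWithinAt_Ici_absRpowRightDeriv hp

lemma hasDerivWithinAt_abs_rpow_Ici (hp : 1 ≤ p) (u : ℝ) :
    HasDerivWithinAt (fun v => |v| ^ p) (absRpowRightDeriv p u) (Ici u) u := by
  rcases lt_or_ge u 0 with hu | hu
  · rw [absRpowRightDeriv, if_pos hu]
    have h := (Real.hasDerivAt_rpow_const (x := -u) (Or.inr hp)).comp u (hasDerivAt_neg u)
    refine ((h.congr_of_eventuallyEq ?_).hasDerivWithinAt).congr_deriv (by ring)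
    filter_upwards [eventually_lt_nhds hu] with v hv
    simp [abs_of_neg hv]
  · rw [absRpowRightDeriv, if_neg (not_lt.mpr hu)]
    refine (Real.hasDerivAt_rpow_const (Or.inr hp)).hasDerivWithinAt.congr (fun v hv => ?_) ?_
    · rw [abs_of_nonneg (hu.trans hv)]
    · rw [abs_of_nonneg hu]

lemma integral_absRpowStieltjes (hp : 1 ≤ p) (a b : ℝ) :
    ∫ u in a..b, absRpowStieltjes hp u = |b| ^ p - |a| ^ p :=
  intervalIntegral.integral_eq_sub_of_hasDeriv_right
    (continuous_abs.rpow_const fun _ => .inr (by linarith)).continuousOn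
    (fun u _ => (hasDerivWithinAt_abs_rpow_Ici hp u).mono Ioi_subset_Ici_self)
    (absRpowStieltjes hp).mono.intervalIntegrable

lemma integrable_abs_sub_rpow (hp : 1 ≤ p) {γ : Measure (ℝ × ℝ)}
    (h₁ : Integrable (fun x => |x| ^ p) (γ.map Prod.fst))
    (h₂ : Integrable (fun y => |y| ^ p) (γ.map Prod.snd)) :
    Integrable (fun z => |z.1 - z.2| ^ p) γ := by
  have hp₀ : ENNReal.ofReal p ≠ 0 := (ENNReal.ofReal_pos.mpr (by linarith)).ne'
  have hp' : (ENNReal.ofReal p).toReal = p := ENNReal.toReal_ofReal (by linarith)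
  have hmemLp : ∀ {ξ : Measure ℝ}, Integrable (fun x => |x| ^ p) ξ →
      MemLp id (ENNReal.ofReal p) ξ := fun h =>
    (integrable_norm_rpow_iff aestronglyMeasurable_id hp₀ ENNReal.ofReal_ne_top).mp
      (by simpa [hp'] using h)
  have h₁' :=
    (memLp_map_measure_iff aestronglyMeasurable_id measurable_fst.aemeasurable).mp (hmemLp h₁)
  have h₂' :=
    (memLp_map_measure_iff aestronglyMeasurable_id measurable_snd.aemeasurable).mp (hmemLp h₂)
  simpa [hp'] using (integrable_norm_rpow_iff (by fun_prop) hp₀ ENNReal.ofReal_ne_top).mpr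
    (h₁'.sub h₂')

theorem integral_abs_sub_rpow_comonotoneCoupling_le (hp : 1 ≤ p) {μ ν : Measure ℝ}
    [IsProbabilityMeasure μ] [IsProbabilityMeasure ν] (hμ : Integrable (fun x => |x| ^ p) μ)
    (hν : Integrable (fun y => |y| ^ p) ν) {γ : Measure (ℝ × ℝ)} [IsProbabilityMeasure γ]
    (hγ₁ : γ.map Prod.fst = μ) (hγ₂ : γ.map Prod.snd = ν) :
    ∫ z, |z.1 - z.2| ^ p ∂comonotoneCoupling μ ν ≤ ∫ z, |z.1 - z.2| ^ p ∂γ := by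
  have hcost : ∀ {κ : Measure (ℝ × ℝ)}, κ.map Prod.fst = μ → κ.map Prod.snd = ν →
      Integrable (fun z => |z.1 - z.2| ^ p) κ := fun h₁ h₂ =>
    integrable_abs_sub_rpow hp (h₁ ▸ hμ) (h₂ ▸ hν)
  refine integral_comp_sub_le_of_forall_measure_Ici_prod_Ici_le (absRpowStieltjes hp)
    (integral_absRpowStieltjes hp) hμ (by simpa using hν) hγ₁ hγ₂
    (comonotoneCoupling_map_fst μ ν) (comonotoneCoupling_map_snd μ ν) (hcost hγ₁ hγ₂)
    (hcost (comonotoneCoupling_map_fst μ ν) (comonotoneCoupling_map_snd μ ν)) fun s t => ?_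
  rw [comonotoneCoupling_Ici_prod_Ici, ← hγ₁, ← hγ₂]
  exact measure_prod_le_min_map γ measurableSet_Ici measurableSet_Ici

end AbsRpow

end ProbabilityTheory

open ProbabilityTheory in
/-- Closed form of the one-dimensional `p`-Wasserstein distance via quantile functions. -/
theorem one_dim_wasserstein_closed_form (p : ℝ) (hp : 1 ≤ p)
    (μ ν : Measure ℝ) [IsProbabilityMeasure μ] [IsProbabilityMeasure ν]
    (hμm : Integrable (fun x => |x| ^ p) μ)
    (hνm : Integrable (fun x => |x| ^ p) ν) :
    (sInf {c : ℝ | ∃ γ : Measure (ℝ × ℝ),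
        IsProbabilityMeasure γ ∧ γ.map Prod.fst = μ ∧ γ.map Prod.snd = ν ∧
        c = ∫ z, |z.1 - z.2| ^ p ∂γ}) ^ ((1:ℝ)/p)
      = (∫ z in Set.Icc (0:ℝ) 1,
          |sInf {x : ℝ | z ≤ (μ (Set.Iic x)).toReal}
            - sInf {x : ℝ | z ≤ (ν (Set.Iic x)).toReal}| ^ p) ^ ((1:ℝ)/p) := by
  have hleast : IsLeast {c : ℝ | ∃ γ : Measure (ℝ × ℝ),
      IsProbabilityMeasure γ ∧ γ.map Prod.fst = μ ∧ γ.map Prod.snd = ν ∧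
      c = ∫ z, |z.1 - z.2| ^ p ∂γ} (∫ z, |z.1 - z.2| ^ p ∂comonotoneCoupling μ ν) := by
    refine ⟨⟨_, inferInstance, comonotoneCoupling_map_fst μ ν, comonotoneCoupling_map_snd μ ν,
      rfl⟩, ?_⟩
    rintro c ⟨γ, hγ, hγ₁, hγ₂, rfl⟩
    exact integral_abs_sub_rpow_comonotoneCoupling_le hp hμm hνm hγ₁ hγ₂
  have hcont : Continuous fun z : ℝ × ℝ => |z.1 - z.2| ^ p :=
    (continuous_fst.sub continuous_snd).abs.rpow_const fun _ => .inr (by linarith)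
  rw [hleast.csInf_eq, comonotoneCoupling,
    integral_map (aemeasurable_quantile_prod μ ν) hcont.aestronglyMeasurable,
    Measure.restrict_congr_set Ioo_ae_eq_Icc]
  simp only [quantile, cdf_eq_real, measureReal_def]
end
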